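/- The quantum amplitude estimation error bound satisfies: if |θ̂ − θ| ≤ π/M with a = sin²(θ) and â = sin²(θ̂), θ, θ̂ ∈ [0, π/2], then |â − a| ≤ 2π√(a(1−a))/M + π²/M². -/

import Mathlib

/-!
Write `δ = θ̂ − θ`. The difference of squares of sines factors as
`sin²θ̂ − sin²θ = sin(θ̂ + θ) sin δ`; since `sin` is 1-Lipschitz, `|sin δ| ≤ |δ|` and
`|sin(θ̂ + θ)| ≤ |sin 2θ| + |δ|`. Finally `√(a(1−a)) = |sin θ cos θ| = |sin 2θ| / 2`.
-/

open Real

namespace Real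

theorem sin_sq_sub_sin_sq (x y : ℝ) : sin x ^ 2 - sin y ^ 2 = sin (x + y) * sin (x - y) := by
  rw [sin_add, sin_sub]
  linear_combination sin y ^ 2 * sin_sq_add_cos_sq x - sin x ^ 2 * sin_sq_add_cos_sq y

theorem abs_sin_sq_sub_sin_sq_le (x y : ℝ) :
    |sin y ^ 2 - sin x ^ 2| ≤ |sin (2 * x)| * |y - x| + |y - x| ^ 2 := by
  have hsum : |sin (y + x)| ≤ |sin (2 * x)| + |y - x| := by
    have hlip := abs_sin_sub_sin_le (y + x) (2 * x)
    rw [show y + x - 2 * x = y - x by ring] at hlip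
    linarith [abs_sub_abs_le_abs_sub (sin (y + x)) (sin (2 * x))]
  calc |sin y ^ 2 - sin x ^ 2| = |sin (y + x)| * |sin (y - x)| := by
        rw [sin_sq_sub_sin_sq, abs_mul]
    _ ≤ (|sin (2 * x)| + |y - x|) * |y - x| :=
        mul_le_mul hsum abs_sin_le_abs (abs_nonneg _) (by positivity)
    _ = |sin (2 * x)| * |y - x| + |y - x| ^ 2 := by ring

theorem sqrt_sin_sq_mul_one_sub_sin_sq (x : ℝ) :
    √(sin x ^ 2 * (1 - sin x ^ 2)) = |sin (2 * x)| / 2 := by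
  rw [← cos_sq', ← mul_pow, sqrt_sq_eq_abs, sin_two_mul, abs_mul, abs_mul, abs_mul, abs_two]
  ring

end Real

theorem qae_amplitude_error_general (θ θh : ℝ)
    (M : ℕ) (h : |θh - θ| ≤ Real.pi / M) :
    |Real.sin θh ^ 2 - Real.sin θ ^ 2|
      ≤ 2 * Real.pi * Real.sqrt (Real.sin θ ^ 2 * (1 - Real.sin θ ^ 2)) / M
        + Real.pi ^ 2 / (M : ℝ) ^ 2 := by
  rw [sqrt_sin_sq_mul_one_sub_sin_sq]
  calc |sin θh ^ 2 - sin θ ^ 2| ≤ |sin (2 * θ)| * |θh - θ| + |θh - θ| ^ 2 :=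
        abs_sin_sq_sub_sin_sq_le θ θh
    _ ≤ |sin (2 * θ)| * (π / M) + (π / M) ^ 2 := by gcongr
    _ = 2 * π * (|sin (2 * θ)| / 2) / M + π ^ 2 / (M : ℝ) ^ 2 := by ring

/-- Conversion of phase-estimation error to amplitude error in QAE: if
`|θ̂ − θ| ≤ π/M` with `a = sin²θ`, `â = sin²θ̂`, `θ, θ̂ ∈ [0, π/2]`, then
`|â − a| ≤ 2π√(a(1−a))/M + π²/M²`. -/
theorem qae_amplitude_error (θ θh : ℝ)
    (hθ : θ ∈ Set.Icc 0 (Real.pi / 2)) (hθh : θh ∈ Set.Icc 0 (Real.pi / 2))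
    (M : ℕ) (hM : 1 ≤ M) (h : |θh - θ| ≤ Real.pi / M) :
    |Real.sin θh ^ 2 - Real.sin θ ^ 2|
      ≤ 2 * Real.pi * Real.sqrt (Real.sin θ ^ 2 * (1 - Real.sin θ ^ 2)) / M
        + Real.pi ^ 2 / (M : ℝ) ^ 2 :=
  qae_amplitude_error_general θ θh M h
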